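/- arXiv:2401.15425 — 5 statements merged into one kernel-verified Lean document; each statement's English description precedes it below -/
import Mathlib

section
/- Let {φ_n}, {α_n}, {ψ_n} be sequences of nonnegative reals with φ_{n+1} ≤ φ_n + α_n (φ_n − φ_{n−1}) + ψ_n for all n ≥ 1, where ∑ ψ_n < ∞ and 0 ≤ α_n ≤ α < 1 for all n ≥ 1. Then lim_{n→∞} φ_n exists (is a real number). -/
open Filter

/-- Alvarez–Attouch type lemma: if nonnegative sequences satisfy
`φ_{n+1} ≤ φ_n + α_n (φ_n − φ_{n−1}) + ψ_n` with `∑ ψ_n < ∞` and `0 ≤ α_n ≤ α < 1`,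
then `lim φ_n` exists. -/
theorem stmt_3 (φ α ψ : ℕ → ℝ) (a : ℝ)
    (hφ : ∀ n, 0 ≤ φ n) (hα : ∀ n, 0 ≤ α n) (hψ : ∀ n, 0 ≤ ψ n)
    (hrec : ∀ n ≥ 1, φ (n + 1) ≤ φ n + α n * (φ n - φ (n - 1)) + ψ n)
    (hψsum : Summable ψ)
    (hαbd : ∀ n ≥ 1, α n ≤ a) (ha : a < 1) :
    ∃ l : ℝ, Tendsto φ atTop (nhds l) := by
  have ha0 : 0 ≤ a := le_trans (hα 1) (hαbd 1 le_rfl)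
  set t : ℕ → ℝ := fun n => max (φ (n + 1) - φ n) 0 with ht
  have ht0 : ∀ n, 0 ≤ t n := fun n => le_max_right _ _
  have htδ : ∀ n, φ (n + 1) - φ n ≤ t n := fun n => le_max_left _ _
  have hC : 0 ≤ ∑' n, ψ n := tsum_nonneg hψ
  have htrec : ∀ n, t (n + 1) ≤ a * t n + ψ (n + 1) := by
    intro n
    have h1 := hrec (n + 1) (by omega)
    simp only [Nat.add_sub_cancel] at h1
    have h2 : α (n + 1) * (φ (n + 1) - φ n) ≤ a * t n := by
      rcases le_or_gt (φ (n + 1) - φ n) 0 with h | h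
      · calc α (n + 1) * (φ (n + 1) - φ n) ≤ 0 :=
              mul_nonpos_of_nonneg_of_nonpos (hα _) h
          _ ≤ a * t n := mul_nonneg ha0 (ht0 n)
      · have heq : t n = φ (n + 1) - φ n := max_eq_left h.le
        rw [heq]
        exact mul_le_mul_of_nonneg_right (hαbd (n + 1) (by omega)) h.le
    refine max_le (by linarith) ?_
    have := mul_nonneg ha0 (ht0 n)
    have := hψ (n + 1)
    linarith
  -- bound on partial sums of t
  have hbound : ∀ N, ∑ k ∈ Finset.range N, t k ≤ (t 0 + ∑' n, ψ n) / (1 - a) := by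
    intro N
    induction N with
    | zero =>
      simp only [Finset.range_zero, Finset.sum_empty]
      exact div_nonneg (by linarith [ht0 0]) (by linarith)
    | succ N ih =>
      have hsum : ∑ k ∈ Finset.range (N + 1), t k
          = ∑ k ∈ Finset.range N, t (k + 1) + t 0 := Finset.sum_range_succ' t N
      have h1 : ∑ k ∈ Finset.range N, t (k + 1)
          ≤ a * ∑ k ∈ Finset.range N, t k + ∑ k ∈ Finset.range N, ψ (k + 1) := by
        rw [Finset.mul_sum, ← Finset.sum_add_distrib]
        exact Finset.sum_le_sum fun k _ => htrec k
      have h2 : ∑ k ∈ Finset.range N, ψ (k + 1) ≤ ∑' n, ψ n := by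
        calc ∑ k ∈ Finset.range N, ψ (k + 1)
            = ∑ k ∈ (Finset.range N).image (· + 1), ψ k := by
              rw [Finset.sum_image (by intro x _ y _ h; simpa using h)]
          _ ≤ ∑' n, ψ n := Summable.sum_le_tsum _ (fun k _ => hψ k) hψsum
      have h3 : a * ∑ k ∈ Finset.range N, t k
          ≤ a * ((t 0 + ∑' n, ψ n) / (1 - a)) :=
        mul_le_mul_of_nonneg_left ih ha0
      have h1a : 0 < 1 - a := by linarith
      have h4 : (1 - a) * ((t 0 + ∑' n, ψ n) / (1 - a)) = t 0 + ∑' n, ψ n :=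
        mul_div_cancel₀ _ (by linarith)
      rw [hsum]
      linarith
  have htsum : Summable t := summable_of_sum_range_le ht0 hbound
  -- θ n = φ n - partial sum of t is antitone and bounded below
  set S : ℕ → ℝ := fun n => ∑ k ∈ Finset.range n, t k with hS
  set θ : ℕ → ℝ := fun n => φ n - S n with hθ
  have hanti : Antitone θ := by
    apply antitone_nat_of_succ_le
    intro n
    have : S (n + 1) = S n + t n := Finset.sum_range_succ t n
    have h := htδ n
    simp only [hθ, this]
    linarith
  have hbdd : BddBelow (Set.range θ) := by
    refine ⟨-∑' n, t n, ?_⟩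
    rintro x ⟨n, rfl⟩
    have h1 : S n ≤ ∑' n, t n := Summable.sum_le_tsum _ (fun k _ => ht0 k) htsum
    have := hφ n
    simp only [hθ]
    linarith
  have hθlim : Tendsto θ atTop (nhds (⨅ n, θ n)) := tendsto_atTop_ciInf hanti hbdd
  have hSlim : Tendsto S atTop (nhds (∑' n, t n)) := htsum.hasSum.tendsto_sum_nat
  refine ⟨(⨅ n, θ n) + ∑' n, t n, ?_⟩
  have : Tendsto (fun n => θ n + S n) atTop (nhds ((⨅ n, θ n) + ∑' n, t n)) :=
    hθlim.add hSlim
  simpa [hθ] using this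
end

section
/- Let F: R^n → R^n be L-Lipschitz continuous, μ ∈ (0,1), λ_0 > 0, and {ζ_n} a nonnegative sequence. Define λ_{n+1} = min{ μ‖b_n − c_n‖/‖F(b_n) − F(c_n)‖, λ_n + ζ_n } if F(b_n) ≠ F(c_n), and λ_{n+1} = λ_n + ζ_n otherwise, where b_n, c_n ∈ R^n are arbitrary. Then λ_n ≥ min{λ_0, μ/L} for all n ≥ 0. -/
/-- The self-adaptive stepsize sequence of the algorithm is bounded below by
`min {λ₀, μ/L}` when `F` is `L`-Lipschitz. -/
theorem stmt_5 (n : ℕ)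
    (F : EuclideanSpace ℝ (Fin n) → EuclideanSpace ℝ (Fin n))
    (L : ℝ) (hL : 0 < L)
    (hFlip : ∀ x y, ‖F x - F y‖ ≤ L * ‖x - y‖)
    (μ : ℝ) (hμ : μ ∈ Set.Ioo (0 : ℝ) 1)
    (lam ζ : ℕ → ℝ) (hlam0 : 0 < lam 0) (hζ : ∀ k, 0 ≤ ζ k)
    (b c : ℕ → EuclideanSpace ℝ (Fin n))
    (hrec_ne : ∀ k, F (b k) ≠ F (c k) →
      lam (k + 1) = min (μ * ‖b k - c k‖ / ‖F (b k) - F (c k)‖) (lam k + ζ k))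
    (hrec_eq : ∀ k, F (b k) = F (c k) → lam (k + 1) = lam k + ζ k) :
    ∀ k, lam k ≥ min (lam 0) (μ / L) := by
  intro k
  induction k with
  | zero => exact min_le_left _ _
  | succ k ih =>
    have hstep : min (lam 0) (μ / L) ≤ lam k + ζ k :=
      le_trans ih (le_add_of_nonneg_right (hζ k))
    by_cases h : F (b k) = F (c k)
    · rw [hrec_eq k h]; exact hstep
    · rw [hrec_ne k h]
      refine le_min ?_ hstep
      have hpos : 0 < ‖F (b k) - F (c k)‖ := by
        rw [norm_pos_iff]; exact sub_ne_zero_of_ne h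
      refine le_trans (min_le_right _ _) ?_
      rw [div_le_div_iff₀ hL hpos]
      calc μ * ‖F (b k) - F (c k)‖ ≤ μ * (L * ‖b k - c k‖) := by
            exact mul_le_mul_of_nonneg_left (hFlip _ _) hμ.1.le
        _ = μ * ‖b k - c k‖ * L := by ring
end

section
/- Let K be nonempty, closed, convex in R^n, F: R^n → R^n monotone and continuous, and suppose sequences {b_n}, {c_n}, {λ_n} satisfy c_n = P_K(b_n − λ_n F(b_n)), b_n → s̃, ‖b_n − c_n‖ → 0, and λ_n → λ > 0. Then s̃ ∈ K and ⟨F(x), x − s̃⟩ ≥ 0 for all x ∈ K; hence s̃ solves VI(F, K). -/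
set_option maxHeartbeats 800000


open RealInnerProductSpace Filter

/-- Any accumulation point of the algorithm with `‖b_n - c_n‖ → 0` solves the
variational inequality (via the Minty condition). -/
theorem stmt_7 (n : ℕ) (K : Set (EuclideanSpace ℝ (Fin n)))
    (hKne : K.Nonempty) (hKc : IsClosed K) (hKconv : Convex ℝ K)
    (F : EuclideanSpace ℝ (Fin n) → EuclideanSpace ℝ (Fin n))
    (hFcont : Continuous F)
    (hFmono : ∀ x y, ⟪F x - F y, x - y⟫ ≥ 0)
    (b c : ℕ → EuclideanSpace ℝ (Fin n)) (lam : ℕ → ℝ) (l : ℝ) (hl : 0 < l)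
    (stilde : EuclideanSpace ℝ (Fin n))
    (hcK : ∀ k, c k ∈ K)
    (hproj : ∀ k, ∀ w ∈ K,
      ‖(b k - lam k • F (b k)) - c k‖ ≤ ‖(b k - lam k • F (b k)) - w‖)
    (hb : Tendsto b atTop (nhds stilde))
    (hbc : Tendsto (fun k => ‖b k - c k‖) atTop (nhds 0))
    (hlam : Tendsto lam atTop (nhds l)) :
    stilde ∈ K ∧ ∀ x ∈ K, ⟪F x, x - stilde⟫ ≥ 0 := by
  -- c tends to stilde
  have hbc0 : Tendsto (fun k => b k - c k) atTop (nhds 0) :=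
    tendsto_zero_iff_norm_tendsto_zero.mpr hbc
  have hc : Tendsto c atTop (nhds stilde) := by
    have := hb.sub hbc0
    simpa using this
  have hsK : stilde ∈ K := hKc.mem_of_tendsto hc (Eventually.of_forall hcK)
  refine ⟨hsK, fun x hx => ?_⟩
  -- projection characterization
  have key : ∀ k, ⟪(b k - lam k • F (b k)) - c k, x - c k⟫ ≤ 0 := by
    intro k
    have hinf : ‖(b k - lam k • F (b k)) - c k‖
        = ⨅ w : K, ‖(b k - lam k • F (b k)) - w‖ := by
      haveI : Nonempty K := hKne.to_subtype
      refine le_antisymm (le_ciInf fun w => hproj k w w.2) ?_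
      have hbdd : BddBelow (Set.range fun w : K =>
          ‖(b k - lam k • F (b k)) - (w : EuclideanSpace ℝ (Fin n))‖) := by
        refine ⟨0, ?_⟩
        rintro _ ⟨w, rfl⟩
        exact norm_nonneg _
      exact ciInf_le hbdd ⟨c k, hcK k⟩
    exact (norm_eq_iInf_iff_real_inner_le_zero hKconv (hcK k)).mp hinf x hx
  -- pointwise inequality
  have hpos : ∀ᶠ k in atTop, 0 < lam k := hlam.eventually (eventually_gt_nhds hl)
  have hineq : ∀ᶠ k in atTop, ⟪b k - c k, x - c k⟫ + lam k * ⟪F (b k), c k - b k⟫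
      ≤ lam k * ⟪F x, x - b k⟫ := by
    filter_upwards [hpos] with k hk
    have h1 : ⟪b k - c k, x - c k⟫ ≤ lam k * ⟪F (b k), x - c k⟫ := by
      have := key k
      have e : (b k - lam k • F (b k)) - c k = (b k - c k) - lam k • F (b k) := by
        abel
      rw [e, inner_sub_left, real_inner_smul_left] at this
      linarith
    have h2 : lam k * ⟪F (b k), x - b k⟫ ≤ lam k * ⟪F x, x - b k⟫ := by
      have hm := hFmono x (b k)
      rw [inner_sub_left] at hm
      nlinarith [hk, hm]
    have e2 : ⟪F (b k), x - b k⟫ = ⟪F (b k), x - c k⟫ + ⟪F (b k), c k - b k⟫ := by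
      rw [← inner_add_right]
      congr 1
      abel
    calc ⟪b k - c k, x - c k⟫ + lam k * ⟪F (b k), c k - b k⟫
        ≤ lam k * ⟪F (b k), x - c k⟫ + lam k * ⟪F (b k), c k - b k⟫ := by linarith
      _ = lam k * ⟪F (b k), x - b k⟫ := by rw [e2]; ring
      _ ≤ lam k * ⟪F x, x - b k⟫ := h2
  -- limits
  have hL : Tendsto (fun k => lam k * ⟪F x, x - b k⟫) atTop
      (nhds (l * ⟪F x, x - stilde⟫)) := by
    exact hlam.mul ((continuous_const.inner (continuous_const.sub continuous_id)).continuousAt.tendsto.comp hb)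
  have hR : Tendsto (fun k => ⟪b k - c k, x - c k⟫ + lam k * ⟪F (b k), c k - b k⟫)
      atTop (nhds 0) := by
    have t1 : Tendsto (fun k => ⟪b k - c k, x - c k⟫) atTop (nhds (⟪(0 : EuclideanSpace ℝ (Fin n)), x - stilde⟫)) :=
      hbc0.inner (tendsto_const_nhds.sub hc)
    have t2 : Tendsto (fun k => lam k * ⟪F (b k), c k - b k⟫) atTop
        (nhds (l * ⟪F stilde, (0 : EuclideanSpace ℝ (Fin n))⟫)) := by
      refine hlam.mul (Tendsto.inner ((hFcont.tendsto _).comp hb) ?_)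
      simpa using hc.sub hb
    have := t1.add t2
    simpa using this
  have hfinal : 0 ≤ l * ⟪F x, x - stilde⟫ :=
    le_of_tendsto_of_tendsto hR hL hineq
  nlinarith [hfinal, hl]
end

section
/- Let F: R^n → R^n be monotone, K ⊂ R^n nonempty closed and convex, s* ∈ VI(F,K), λ_n, λ_{n+1} > 0, μ ∈ (0,1), and b_n ∈ R^n. Set c_n = P_K(b_n − λ_n F(b_n)) and e_n = c_n − λ_n (F(c_n) − F(b_n)). If ‖F(b_n) − F(c_n)‖ ≤ (μ/λ_{n+1})‖b_n − c_n‖, then ‖e_n − s*‖² ≤ ‖b_n − s*‖² − (1 − μ²λ_n²/λ_{n+1}²)‖b_n − c_n‖². -/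
open RealInnerProductSpace

lemma proj_inner_le {E : Type*} [NormedAddCommGroup E] [InnerProductSpace ℝ E]
    {K : Set E} (hKconv : Convex ℝ K) {z c : E} (hcK : c ∈ K)
    (hproj : ∀ w ∈ K, ‖z - c‖ ≤ ‖z - w‖) : ∀ w ∈ K, ⟪z - c, w - c⟫ ≤ 0 := by
  have : Nonempty K := ⟨⟨c, hcK⟩⟩
  have hinf : ‖z - c‖ = ⨅ w : K, ‖z - w‖ :=
    le_antisymm (le_ciInf fun w => hproj w w.2)
      (ciInf_le (f := fun w : K => ‖z - w‖) ⟨(0 : ℝ), by rintro x ⟨w, rfl⟩; exact norm_nonneg _⟩ ⟨c, hcK⟩)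
  exact (norm_eq_iInf_iff_real_inner_le_zero hKconv hcK).mp hinf

set_option maxHeartbeats 1000000 in
/-- Key one-step estimate for the extragradient iterate `e_n` under the adaptive
stepsize condition. -/
theorem stmt_8 (n : ℕ) (K : Set (EuclideanSpace ℝ (Fin n)))
    (hKne : K.Nonempty) (hKc : IsClosed K) (hKconv : Convex ℝ K)
    (F : EuclideanSpace ℝ (Fin n) → EuclideanSpace ℝ (Fin n))
    (hFmono : ∀ x y, ⟪F x - F y, x - y⟫ ≥ 0)
    (sstar : EuclideanSpace ℝ (Fin n)) (hsK : sstar ∈ K)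
    (hsVI : ∀ x ∈ K, ⟪F sstar, x - sstar⟫ ≥ 0)
    (lam lam' : ℝ) (hlam : 0 < lam) (hlam' : 0 < lam')
    (μ : ℝ) (hμ : μ ∈ Set.Ioo (0 : ℝ) 1)
    (b c e : EuclideanSpace ℝ (Fin n))
    (hcK : c ∈ K)
    (hproj : ∀ w ∈ K, ‖(b - lam • F b) - c‖ ≤ ‖(b - lam • F b) - w‖)
    (he : e = c - lam • (F c - F b))
    (hstep : ‖F b - F c‖ ≤ (μ / lam') * ‖b - c‖) :
    ‖e - sstar‖ ^ 2 ≤ ‖b - sstar‖ ^ 2 -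
      (1 - μ ^ 2 * lam ^ 2 / lam' ^ 2) * ‖b - c‖ ^ 2 := by
  subst he
  -- projection characterization
  have hA : ⟪(b - lam • F b) - c, sstar - c⟫ ≤ 0 :=
    proj_inner_le hKconv hcK hproj sstar hsK
  have hB : ⟪F c - F sstar, c - sstar⟫ ≥ 0 := hFmono c sstar
  have hC : ⟪F sstar, c - sstar⟫ ≥ 0 := hsVI c hcK
  have hD : ‖F b - F c‖ ^ 2 ≤ (μ / lam') ^ 2 * ‖b - c‖ ^ 2 := by
    have := mul_self_le_mul_self (norm_nonneg (F b - F c)) hstep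
    nlinarith [this]
  have e1 : ‖(c - lam • (F c - F b)) - sstar‖ ^ 2
      = ‖c - sstar‖ ^ 2 - 2 * lam * ⟪F c - F b, c - sstar⟫
        + lam ^ 2 * ‖F b - F c‖ ^ 2 := by
    have h1 : (c - lam • (F c - F b)) - sstar = (c - sstar) - lam • (F c - F b) := by
      abel
    rw [h1, @norm_sub_sq_real, real_inner_smul_right, norm_smul, real_inner_comm]
    have : ‖F b - F c‖ = ‖F c - F b‖ := norm_sub_rev _ _
    rw [this]
    simp [Real.norm_eq_abs, mul_pow, sq_abs]
    ring
  have e2 : ‖c - sstar‖ ^ 2 = ‖b - sstar‖ ^ 2 - ‖b - c‖ ^ 2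
      + 2 * ⟪b - c, sstar - c⟫ := by
    have h1 : b - sstar = (b - c) + (c - sstar) := by abel
    have h2 : ⟪b - c, c - sstar⟫ = - ⟪b - c, sstar - c⟫ := by
      rw [← inner_neg_right]; congr 1; abel
    rw [h1, @norm_add_sq_real, h2]; ring
  have hA' : ⟪b - c, sstar - c⟫ ≤ lam * ⟪F b, sstar - c⟫ := by
    have : ⟪(b - lam • F b) - c, sstar - c⟫
        = ⟪b - c, sstar - c⟫ - lam * ⟪F b, sstar - c⟫ := by
      rw [show (b - lam • F b) - c = (b - c) - lam • F b by abel,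
        inner_sub_left, real_inner_smul_left]
    linarith [hA, this.symm.le, this.le]
  -- combine inner products: ⟪F c - F b, c - sstar⟫ and ⟪F b, sstar - c⟫
  have key : lam * ⟪F b, sstar - c⟫ - lam * ⟪F c - F b, c - sstar⟫ ≤ 0 := by
    have h1 : ⟪F c - F b, c - sstar⟫ = ⟪F c, c - sstar⟫ - ⟪F b, c - sstar⟫ := by
      rw [inner_sub_left]
    have h2 : ⟪F b, sstar - c⟫ = - ⟪F b, c - sstar⟫ := by
      rw [← inner_neg_right]; congr 1; abel
    have h3 : ⟪F c - F sstar, c - sstar⟫ = ⟪F c, c - sstar⟫ - ⟪F sstar, c - sstar⟫ := by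
      rw [inner_sub_left]
    have hFc : ⟪F c, c - sstar⟫ ≥ 0 := by linarith
    have : lam * ⟪F b, sstar - c⟫ - lam * ⟪F c - F b, c - sstar⟫
        = - (lam * ⟪F c, c - sstar⟫) := by rw [h1, h2]; ring
    rw [this]
    have := mul_nonneg hlam.le hFc
    linarith
  have hE : lam ^ 2 * ‖F b - F c‖ ^ 2 ≤ μ ^ 2 * lam ^ 2 / lam' ^ 2 * ‖b - c‖ ^ 2 := by
    have h := mul_le_mul_of_nonneg_left hD (sq_nonneg lam)
    have h2 : lam ^ 2 * ((μ / lam') ^ 2 * ‖b - c‖ ^ 2)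
        = μ ^ 2 * lam ^ 2 / lam' ^ 2 * ‖b - c‖ ^ 2 := by
      field_simp
    linarith
  linarith [e1, e2, hA', key, hE]
end

section
/- Let ρ ∈ (0, 1/(1+δ)) for some δ > 2, and let α, β be real numbers with 0 ≤ β ≤ α < 1 − √(2/δ). Then (1−ρ)·α(1+α) + ρ·β(1+β) − ((1−ρ)/ρ)(α−1)² ≤ 0. -/
/-- Key parameter inequality for the monotone decrease of the Lyapunov sequence. -/
theorem stmt_9 (δ ρ α β : ℝ) (hδ : 2 < δ)
    (hρ : ρ ∈ Set.Ioo (0 : ℝ) (1 / (1 + δ)))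
    (hβ0 : 0 ≤ β) (hβα : β ≤ α) (hα : α < 1 - Real.sqrt (2 / δ)) :
    (1 - ρ) * (α * (1 + α)) + ρ * (β * (1 + β)) - (1 - ρ) / ρ * (α - 1) ^ 2 ≤ 0 := by
  obtain ⟨hρ0, hρ1⟩ := hρ
  have hδ0 : (0:ℝ) < δ := by linarith
  have hd0 : (0:ℝ) ≤ 2 / δ := by positivity
  have hs : Real.sqrt (2 / δ) ^ 2 = 2 / δ := Real.sq_sqrt hd0
  have hsn : 0 ≤ Real.sqrt (2 / δ) := Real.sqrt_nonneg _
  have hα1 : α < 1 := by linarith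
  have hρ1' : ρ * (1 + δ) < 1 := by
    rw [lt_div_iff₀ (by linarith)] at hρ1; linarith
  have ht : δ < (1 - ρ) / ρ := by
    rw [lt_div_iff₀ hρ0]; nlinarith
  have h6 : 2 / δ < (1 - α) ^ 2 := by nlinarith
  have h7 : δ * (2 / δ) = 2 := by field_simp
  have h8 : δ * (1 - α) ^ 2 ≤ (1 - ρ) / ρ * (1 - α) ^ 2 := by
    apply mul_le_mul_of_nonneg_right (le_of_lt ht) (sq_nonneg _)
  have h9 : (α - 1) ^ 2 = (1 - α) ^ 2 := by ring
  have h10 : β * (1 + β) ≤ α * (1 + α) := by nlinarith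
  nlinarith [h6, h7, h8, h9, h10, mul_lt_mul_of_pos_left h6 hδ0]
end
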